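/- arXiv:1507.00392 — 4 statements merged into one kernel-verified Lean document; each statement's English description precedes it below -/
import Mathlib

section
/- Let M be a complex representation of a quiver Q with ordered basis B and β ⊆ B, and let ι_β : C_β^M → Mat_{B×B}(ℂ) be the injective morphism sending a point N of the Schubert cell to its unique matrix representation in β-normal form. Then the image of ι_β equals the intersection of the variety V(M,B) with the solution set of the linear conditions (NF1)–(NF5). -/
/-!
Common framework for formalizing "Quiver Grassmannians of type D̃_n, Part 1"
(Lorscheid–Weist).

A quiver is given by finite vertex and arrow types with source and target maps.
A complex representation `M` of a quiver together with a chosen ordered basis `B`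
is encoded by the data of the basis: a finite linearly ordered type `B`, a map
`F : B → Q.V` recording over which vertex each basis vector lies, and the matrix
coefficients `μ v i j` of the structure maps, i.e. `M_v(i) = ∑ j, μ v i j • j`.
-/

open scoped Classical

noncomputable section

namespace LW

/-- A finite quiver: finite types of vertices and arrows, with source and target maps. -/
structure QuiverData : Type 1 where
  V : Type
  A : Type
  fV : Fintype V
  fA : Fintype A
  dV : DecidableEq V
  dA : DecidableEq A
  src : A → V
  tgt : A → V

attribute [instance] QuiverData.fV QuiverData.fA QuiverData.dV QuiverData.dA

/-- A finite dimensional complex representation `M` of the quiver `Q` together with an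
ordered basis `B`: `F i` is the vertex over which the basis element `i` lies, and
`μ v i j` is the coefficient of the basis element `j` in `M_v(i)`. -/
structure BasedRep (Q : QuiverData) : Type 1 where
  B : Type
  fB : Fintype B
  lB : LinearOrder B
  F : B → Q.V
  μ : Q.A → B → B → ℂ
  μ_src : ∀ v i j, μ v i j ≠ 0 → F i = Q.src v
  μ_tgt : ∀ v i j, μ v i j ≠ 0 → F j = Q.tgt v

attribute [instance] BasedRep.fB BasedRep.lB

variable {Q : QuiverData}

namespace BasedRep

variable (R : BasedRep Q)

/-- The vector space `M_p` of the representation at the vertex `p`, with coordinates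
indexed by the part of the basis lying over `p`. -/
abbrev Vtx (p : Q.V) : Type := {i : R.B // R.F i = p} → ℂ

/-- The structure map `M_v` of the representation, in the coordinates given by the basis. -/
def arrowApply (v : Q.A) (x : R.Vtx (Q.src v)) : R.Vtx (Q.tgt v) :=
  fun j => ∑ i : {i : R.B // R.F i = Q.src v}, R.μ v i.1 j.1 * x i

/-- A family of subspaces of `M`, one at each vertex. -/
abbrev SubFam : Type := ∀ p : Q.V, Submodule ℂ (R.Vtx p)

/-- The family `N` of subspaces is a subrepresentation of `M`. -/
def IsSubrep (N : R.SubFam) : Prop :=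
  ∀ (v : Q.A) (x : R.Vtx (Q.src v)), x ∈ N (Q.src v) → R.arrowApply v x ∈ N (Q.tgt v)

/-- The quiver Grassmannian `Gr_e(M)`: all subrepresentations of `M` with dimension
vector `e`. -/
def grassmannian (e : Q.V → ℕ) : Set R.SubFam :=
  {N | R.IsSubrep N ∧ ∀ p : Q.V, Module.finrank ℂ (N p) = e p}

/-- `j` is a pivot of the subspace `W ⊆ M_p`: there is a vector in `W` whose largest
nonvanishing coordinate is `j`.  The Schubert cell `C_β` of the Grassmannian consists of
the subspaces with pivot set `β` (equivalently, `Δ_β ≠ 0` and `Δ_{β'} = 0` for `β' > β`). -/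
def IsPivot {p : Q.V} (W : Submodule ℂ (R.Vtx p)) (j : {i : R.B // R.F i = p}) : Prop :=
  ∃ x ∈ W, x j ≠ 0 ∧ ∀ i : {i : R.B // R.F i = p}, j.1 < i.1 → x i = 0

/-- The Schubert cell `C_β^M ⊆ Gr_e(M)`: the intersection of the quiver Grassmannian with
the product of the Schubert cells of the ambient Grassmannians determined by `β` and the
ordered basis. -/
def schubertCell (e : Q.V → ℕ) (β : Finset R.B) : Set R.SubFam :=
  {N | N ∈ R.grassmannian e ∧
    ∀ (p : Q.V) (j : {i : R.B // R.F i = p}), j.1 ∈ β ↔ R.IsPivot (N p) j}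

/-- `β ⊆ B` is of type `e`, i.e. `#(β ∩ B_p) = e p` for every vertex `p`. -/
def IsType (e : Q.V → ℕ) (β : Finset R.B) : Prop :=
  ∀ p : Q.V, (β.filter fun i => R.F i = p).card = e p

/-- The type of a subset `β ⊆ B`, as a dimension vector. -/
def typeVec (β : Finset R.B) : Q.V → ℕ :=
  fun p => (β.filter fun i => R.F i = p).card

/-- The conditions (NF1)–(NF5) for a matrix to be in `β`-normal form. -/
def NormalForm (β : Finset R.B) (w : R.B → R.B → ℂ) : Prop :=
  (∀ i ∈ β, w i i = 1) ∧
  (∀ i ∈ β, ∀ j ∈ β, j ≠ i → w i j = 0) ∧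
  (∀ i : R.B, ∀ j ∈ β, j < i → w i j = 0) ∧
  (∀ i j : R.B, j ∉ β → w i j = 0) ∧
  (∀ i j : R.B, j ∈ β → R.F i ≠ R.F j → w i j = 0)

/-- The `j`-th column of a matrix, as a vector in `M_p`. -/
def column (w : R.B → R.B → ℂ) (j : R.B) (p : Q.V) : R.Vtx p := fun i => w i.1 j

/-- `w` is a matrix representation of the subrepresentation `N` with respect to `β`:
for every vertex `p` the columns indexed by `β ∩ B_p` form a basis of `N_p`, and all other
entries of `w` vanish. -/
def IsMatrixRep (β : Finset R.B) (N : R.SubFam) (w : R.B → R.B → ℂ) : Prop :=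
  (∀ i j : R.B, j ∉ β → w i j = 0) ∧
  (∀ i j : R.B, R.F i ≠ R.F j → w i j = 0) ∧
  (∀ p : Q.V,
    N p = Submodule.span ℂ {x : R.Vtx p | ∃ j ∈ β, R.F j = p ∧ x = R.column w j p}) ∧
  (∀ p : Q.V,
    LinearIndependent ℂ fun j : {j : R.B // j ∈ β ∧ R.F j = p} => R.column w j.1 p)

/-- The value of the polynomial `E(v,t,s)` at the matrix `w`. -/
def Efun (v : Q.A) (t s : R.B) (w : R.B → R.B → ℂ) : ℂ :=
  (∑ s' : R.B, ∑ t' : R.B, R.μ v s' t' * w t t' * w s' s) -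
    ∑ s' : R.B, R.μ v s' t * w s' s

/-- The Schubert cell in its matrix coordinates: the image of the embedding `ι_β` of
`C_β^M` into the affine space of matrices given by the unique `β`-normal form matrix
representation.  This is the model of `C_β^M` as an affine variety. -/
def cellMatrixModel (e : Q.V → ℕ) (β : Finset R.B) : Set (R.B → R.B → ℂ) :=
  {w | R.NormalForm β w ∧ ∃ N ∈ R.schubertCell e β, R.IsMatrixRep β N w}

/-- `Z` is (as an affine variety) an affine space of dimension `n`: there are mutually
inverse polynomial maps between `𝔸^n` and `Z`. -/
def IsAffineSpaceDim (Z : Set (R.B → R.B → ℂ)) (n : ℕ) : Prop :=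
  ∃ (φ : (Fin n → ℂ) → R.B → R.B → ℂ) (ψ : (R.B → R.B → ℂ) → Fin n → ℂ),
    (∀ i j : R.B, ∃ p : MvPolynomial (Fin n) ℂ, ∀ x, φ x i j = MvPolynomial.eval x p) ∧
    (∀ k : Fin n, ∃ p : MvPolynomial (R.B × R.B) ℂ,
      ∀ w, ψ w k = MvPolynomial.eval (fun q : R.B × R.B => w q.1 q.2) p) ∧
    Set.range φ = Z ∧ (∀ x, ψ (φ x) = x)

/-- The Schubert decomposition `Gr_e(M) = ∐_β C_β^M` is a decomposition into affine
spaces: every Schubert cell is empty or an affine space. -/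
def DecompIntoAffine (e : Q.V → ℕ) : Prop :=
  ∀ β : Finset R.B, R.IsType e β →
    R.schubertCell e β = ∅ ∨ ∃ n : ℕ, R.IsAffineSpaceDim (R.cellMatrixModel e β) n

/-! ### The Schubert system -/

/-- The polynomial `E(v,t,s)` in the variables `w_{i,j}`. -/
def Epoly (v : Q.A) (t s : R.B) : MvPolynomial (R.B × R.B) ℂ :=
  (∑ s' : R.B, ∑ t' : R.B,
    MvPolynomial.C (R.μ v s' t') * MvPolynomial.X (t, t') * MvPolynomial.X (s', s)) -
  ∑ s' : R.B, MvPolynomial.C (R.μ v s' t) * MvPolynomial.X (s', s)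

/-- The set `Rel²` of relevant pairs. -/
def Rel2 : Set (R.B × R.B) := {x | R.F x.1 = R.F x.2 ∧ x.1 ≤ x.2}

/-- The set `Rel³` of relevant triples `(v,t,s)` (encoded as `(v,(t,s))`). -/
def Rel3 : Set (Q.A × R.B × R.B) :=
  {y | R.F y.2.1 = Q.tgt y.1 ∧ R.F y.2.2 = Q.src y.1 ∧
    ∃ s' t' : R.B, R.μ y.1 s' t' ≠ 0 ∧ s' ≤ y.2.2 ∧ y.2.1 ≤ t'}

/-- The squarefree monomial with support `S`. -/
def monom (S : Finset (R.B × R.B)) : (R.B × R.B) →₀ ℕ := ∑ x ∈ S, Finsupp.single x 1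

/-- The weight `μ_λ` of the link `λ = ((v,t,s), S)` of the Schubert system: the
coefficient of the monomial `∏_{(i,j) ∈ S} w_{i,j}` in `E(v,t,s)`; `λ` is a link iff
this weight is nonzero. -/
def linkWeight (y : Q.A × R.B × R.B) (S : Finset (R.B × R.B)) : ℂ :=
  if y ∈ R.Rel3 ∧ ↑S ⊆ R.Rel2 then (R.Epoly y.1 y.2.1 y.2.2).coeff (R.monom S) else 0

/-- `{(v,t,s), (i,j)}` is an edge of the Schubert system, i.e. `w_{i,j}` appears in
`E(v,t,s)`. -/
def IsEdge (y : Q.A × R.B × R.B) (x : R.B × R.B) : Prop :=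
  ∃ S : Finset (R.B × R.B), R.linkWeight y S ≠ 0 ∧ x ∈ S

/-- The sum `∑_λ μ_λ ∏_{(i,j) ∈ S} g(i,j)` over all links with tip `(v,t,s)`. -/
def linkSum (y : Q.A × R.B × R.B) (g : R.B × R.B → ℂ) : ℂ :=
  ∑ S : Finset (R.B × R.B), R.linkWeight y S * ∏ x ∈ S, g x

/-- A partial evaluation of the Schubert system: a partial function `Rel² ⇀ ℂ`
satisfying the condition (EV). -/
def IsPEval (ev : R.B × R.B → Option ℂ) : Prop :=
  (∀ x : R.B × R.B, (ev x).isSome → x ∈ R.Rel2) ∧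
  ∀ (y : Q.A × R.B × R.B) (kl : R.B × R.B), R.IsEdge y kl →
    (∀ ij : R.B × R.B, R.IsEdge y ij → ij ≠ kl → (ev ij).isSome) →
    ((ev kl).isSome ∧ R.linkSum y (fun x => (ev x).getD 0) = 0)

/-- The set `Ev(f)` of all partial evaluations extending the partial function `f`. -/
def EvSet (f : R.B × R.B → Option ℂ) : Set (R.B × R.B → Option ℂ) :=
  {ev | R.IsPEval ev ∧ ∀ x c, f x = some c → ev x = some c}

/-- The partial function `f_β` determined by the normal form conditions (NF1)–(NF5). -/
def fbeta (β : Finset R.B) : R.B × R.B → Option ℂ := fun x =>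
  if x ∈ R.Rel2 then
    if x.1 = x.2 ∧ x.1 ∈ β then some 1
    else if x.1 ∈ β then some 0
    else if x.2 ∉ β then some 0
    else none
  else none

/-- The `β`-state `Σ_β` is contradictory: `Ev(f_β)` is empty. -/
def Contradictory (β : Finset R.B) : Prop := R.EvSet (R.fbeta β) = ∅

/-- A partial evaluation is total if its domain is all of `Rel²`. -/
def IsTotalEval (ev : R.B × R.B → Option ℂ) : Prop :=
  ∀ x ∈ R.Rel2, (ev x).isSome

/-- The matrix determined by a (total) evaluation. -/
def matrixOfEval (ev : R.B × R.B → Option ℂ) : R.B → R.B → ℂ :=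
  fun i j => if (i, j) ∈ R.Rel2 then (ev (i, j)).getD 0 else 0

/-! ### β-states -/

/-- The weight `μ_{β,λ}` of the link `λ = ((v,t,s),S)` of the `β`-state `Σ_β` obtained
from the minimal partial evaluation `ev`. -/
def stateWeight (ev : R.B × R.B → Option ℂ) (y : Q.A × R.B × R.B)
    (S : Finset (R.B × R.B)) : ℂ :=
  ∑ S' : Finset (R.B × R.B),
    if S'.filter (fun x => ¬(ev x).isSome) = S then
      R.linkWeight y S' * ∏ x ∈ S'.filter (fun x => (ev x).isSome), (ev x).getD 0
    else 0

/-- The `β`-relevant pairs: the vertices `(i,j) ∈ Rel²` of the `β`-state. -/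
def statePairs (ev : R.B × R.B → Option ℂ) : Set (R.B × R.B) :=
  {x | x ∈ R.Rel2 ∧ ¬(ev x).isSome}

/-- The `β`-relevant triples: the vertices `(v,t,s) ∈ Rel³` of the `β`-state, i.e. the
tips of its links. -/
def stateTriples (ev : R.B × R.B → Option ℂ) : Set (Q.A × R.B × R.B) :=
  {y | ∃ S : Finset (R.B × R.B), R.stateWeight ev y S ≠ 0}

/-- The zero set of the `β`-reduced polynomials `E_β(v,t,s)` for the `β`-relevant triples,
inside the affine space spanned by the coordinates `w_{i,j}` with `(i,j)` `β`-relevant. -/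
def stateVariety (ev : R.B × R.B → Option ℂ) : Set (R.B × R.B → ℂ) :=
  {g | (∀ x, x ∉ R.statePairs ev → g x = 0) ∧
    ∀ y ∈ R.stateTriples ev,
      ∑ S : Finset (R.B × R.B), R.stateWeight ev y S * ∏ x ∈ S, g x = 0}

/-- The matrix obtained by combining a point of the `β`-state variety with the values of
the minimal partial evaluation. -/
def stateMatrix (ev : R.B × R.B → Option ℂ) (g : R.B × R.B → ℂ) : R.B → R.B → ℂ :=
  fun i j =>
    if (i, j) ∈ R.statePairs ev then g (i, j)
    else if (i, j) ∈ R.Rel2 then (ev (i, j)).getD 0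
    else 0

/-! ### Extremal arrows and the reduced Schubert system -/

/-- The arrow `(v,s,t)` of the coefficient quiver `Γ` is extremal: every other arrow
`(v,s',t')` of `Γ` over `v` satisfies `s < s'` or `t' < t`. -/
def ExtremalArrow (v : Q.A) (s t : R.B) : Prop :=
  R.μ v s t ≠ 0 ∧
    ∀ s' t' : R.B, R.μ v s' t' ≠ 0 → (s', t') ≠ (s, t) → s < s' ∨ t' < t

/-- `β` is extremal successor closed: for every extremal arrow `(v,s,t)` of `Γ`,
`s ∈ β` implies `t ∈ β`. -/
def ExtrSuccClosed (β : Finset R.B) : Prop :=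
  ∀ v s t, R.ExtremalArrow v s t → s ∈ β → t ∈ β

/-- `β` is contradictory of the first kind: not extremal successor closed. -/
def ContradictoryFst (β : Finset R.B) : Prop := ¬ R.ExtrSuccClosed β

/-- The reduced polynomial `Ē(v,t,s)`. -/
def Ebar (v : Q.A) (t s : R.B) : MvPolynomial (R.B × R.B) ℂ :=
  (∑ t' : R.B,
    if t < t' then MvPolynomial.C (R.μ v s t') * MvPolynomial.X (t, t') else 0) +
  (∑ s' : R.B, ∑ t' : R.B,
    if t < t' ∧ s' < s then
      MvPolynomial.C (R.μ v s' t') * MvPolynomial.X (t, t') * MvPolynomial.X (s', s)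
    else 0) -
  (∑ s' : R.B,
    if s' < s then MvPolynomial.C (R.μ v s' t) * MvPolynomial.X (s', s) else 0) -
  MvPolynomial.C (R.μ v s t)

/-- The relevant pairs `(i,j)` with `i < j`: the pair vertices of the reduced Schubert
system. -/
def Rel2lt : Set (R.B × R.B) := {x | R.F x.1 = R.F x.2 ∧ x.1 < x.2}

/-- The triple vertices of the reduced Schubert system: relevant triples `(v,t,s)` such
that `(v,s,t)` is not an extremal arrow of `Γ`. -/
def Rel3red : Set (Q.A × R.B × R.B) :=
  {y | y ∈ R.Rel3 ∧ ¬ R.ExtremalArrow y.1 y.2.2 y.2.1}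

/-- The weights of the links of the reduced Schubert system `Σ̄`: the coefficients of the
monomials of the reduced polynomials `Ē(v,t,s)`. -/
def redWeight (y : Q.A × R.B × R.B) (S : Finset (R.B × R.B)) : ℂ :=
  if y ∈ R.Rel3red ∧ ↑S ⊆ R.Rel2lt then (R.Ebar y.1 y.2.1 y.2.2).coeff (R.monom S) else 0

end BasedRep

/-! ### Abstract systems, solutions, patches and patchworks -/

/-- The extension order on partial functions with values in `ℂ`. -/
def evalLE {α : Type} (e₁ e₂ : α → Option ℂ) : Prop :=
  ∀ x c, e₁ x = some c → e₂ x = some c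

/-- An edge of a system given by a weight function: `{τ, π}` is an edge iff it is a leg
of some link. -/
def edgeOf {P T : Type} (w : T → Finset P → ℂ) (τ : T) (π : P) : Prop :=
  ∃ S : Finset P, w τ S ≠ 0 ∧ π ∈ S

/-- The edge `{τ, π}` is simply linked: `(τ, {π})` is a link and `{τ, π}` is the leg of
no other link. -/
def SimplyLinked {P T : Type} (w : T → Finset P → ℂ) (τ : T) (π : P) : Prop :=
  w τ {π} ≠ 0 ∧ ∀ S : Finset P, π ∈ S → S ≠ {π} → w τ S = 0

/-- One step of the directed graph determined by an orientation of the edges of a system: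
`Aw` is the set of edges oriented away from their triple (towards their pair); all other
edges are oriented towards their triple. -/
def solStep {P T : Type} (w : T → Finset P → ℂ) (Aw : Set (T × P)) :
    T ⊕ P → T ⊕ P → Prop := fun a b =>
  match a, b with
  | Sum.inl τ, Sum.inr π => (τ, π) ∈ Aw
  | Sum.inr π, Sum.inl τ => edgeOf w τ π ∧ (τ, π) ∉ Aw
  | _, _ => False

/-- A solution for a system with triple set `triples` and weight function `w`:
an orientation of the edges such that (S1) every triple has precisely one edge oriented
away from it, and this edge is simply linked; (S2) every pair has at most one edge
oriented towards it; (S3) there are no oriented cycles. -/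
structure IsSolution {P T : Type} (triples : Set T) (w : T → Finset P → ℂ)
    (Aw : Set (T × P)) : Prop where
  mem_edge : ∀ τ π, (τ, π) ∈ Aw → edgeOf w τ π
  s1 : ∀ τ ∈ triples, ∃! π, (τ, π) ∈ Aw
  s1' : ∀ τ π, (τ, π) ∈ Aw → SimplyLinked w τ π
  s2 : ∀ π : P, {τ : T | (τ, π) ∈ Aw}.Subsingleton
  s3 : ∀ x : T ⊕ P, ¬ Relation.TransGen (solStep w Aw) x x

/-- A system is solvable if it admits a solution. -/
def Solvable {P T : Type} (triples : Set T) (w : T → Finset P → ℂ) : Prop :=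
  ∃ Aw : Set (T × P), IsSolution triples w Aw

/-- The weight function of the full subsystem on the vertex sets `P'`, `T'`. -/
def clipW {P T : Type} (P' : Set P) (T' : Set T) (w : T → Finset P → ℂ) :
    T → Finset P → ℂ :=
  fun τ S => if τ ∈ T' ∧ ↑S ⊆ P' then w τ S else 0

/-- The full subsystem on `(P', T')` is a patch of the system on `(pairs, triples)` with
weights `w`: it contains the base vertices of all links of the ambient system with a leg
in it. -/
def IsPatchOf {P T : Type} (pairs : Set P) (triples : Set T) (w : T → Finset P → ℂ)
    (P' : Set P) (T' : Set T) : Prop :=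
  P' ⊆ pairs ∧ T' ⊆ triples ∧
    ∀ τ ∈ T', ∀ S : Finset P, w τ S ≠ 0 → (∃ π ∈ S, π ∈ P') → ∀ π ∈ S, π ∈ P'

/-- A patchwork for the system on `(pairs, triples)` with weights `w`: a family of
patches indexed by a partially ordered set `I` satisfying (P1)–(P3). -/
structure Patchwork {P T : Type} (pairs : Set P) (triples : Set T)
    (w : T → Finset P → ℂ) (I : Type) [PartialOrder I] where
  pPairs : I → Set P
  pTriples : I → Set T
  isPatch : ∀ k : I, IsPatchOf pairs triples w (pPairs k) (pTriples k)
  coverP : ∀ π ∈ pairs, ∃ k : I, π ∈ pPairs k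
  coverT : ∀ τ ∈ triples, ∃ k : I, τ ∈ pTriples k
  disjT : ∀ k l : I, k ≠ l → ∀ τ : T, τ ∈ pTriples k → τ ∉ pTriples l
  p3 : ∀ (l : I) (τ : T) (π : P), τ ∈ pTriples l → edgeOf w τ π →
    ∃ k : I, k ≤ l ∧ π ∈ pPairs k

/-- A patchwork solution: a solution for every patch, satisfying the compatibility
condition (PS). -/
def IsPatchworkSolution {P T : Type} {pairs : Set P} {triples : Set T}
    {w : T → Finset P → ℂ} {I : Type} [PartialOrder I]
    (pw : Patchwork pairs triples w I) (Aw : I → Set (T × P)) : Prop :=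
  (∀ k : I, IsSolution (pw.pTriples k) (clipW (pw.pPairs k) (pw.pTriples k) w) (Aw k)) ∧
  ∀ (k l : I) (τ : T) (π : P), (τ, π) ∈ Aw k → π ∈ pw.pPairs l → k ≤ l

/-- The Euler form of a quiver. -/
def eulerForm (Q : QuiverData) (α γ : Q.V → ℤ) : ℤ :=
  (∑ p : Q.V, α p * γ p) - ∑ v : Q.A, α (Q.src v) * γ (Q.tgt v)

namespace BasedRep

variable (R : BasedRep Q)

/-- An extremal edge `{(v,t,s), (i,j)}` of the reduced Schubert system. -/
def ExtremalEdge (y : Q.A × R.B × R.B) (x : R.B × R.B) : Prop :=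
  SimplyLinked R.redWeight y x ∧
    ((x.2 = y.2.2 ∧ R.ExtremalArrow y.1 x.1 y.2.1) ∨
      (x.1 = y.2.1 ∧ R.ExtremalArrow y.1 y.2.2 x.2))

/-- An extremal solution for a (full sub)system of the reduced Schubert system with
triple set `triples` and weight function `w`: an orientation such that (ES1) every triple
has precisely one edge oriented away from it and this edge is extremal, (ES2) every pair
has at most one edge oriented towards it, (ES3) there are no oriented cycles. -/
def IsExtremalSolution (triples : Set (Q.A × R.B × R.B))
    (w : Q.A × R.B × R.B → Finset (R.B × R.B) → ℂ)
    (Aw : Set ((Q.A × R.B × R.B) × (R.B × R.B))) : Prop :=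
  (∀ τ π, (τ, π) ∈ Aw → edgeOf w τ π ∧ R.ExtremalEdge τ π) ∧
  (∀ τ ∈ triples, ∃! π, (τ, π) ∈ Aw) ∧
  (∀ π : R.B × R.B, {τ | (τ, π) ∈ Aw}.Subsingleton) ∧
  (∀ x, ¬ Relation.TransGen (solStep w Aw) x x)

/-- The (reduced) Schubert system is totally solvable: every `β`-state is either
contradictory or solvable. -/
def TotallySolvable : Prop :=
  ∀ β : Finset R.B, R.Contradictory β ∨
    ∀ ev ∈ R.EvSet (R.fbeta β), (∀ ev' ∈ R.EvSet (R.fbeta β), evalLE ev ev') →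
      Solvable (R.stateTriples ev) (R.stateWeight ev)

/-! ### Representation-theoretic notions -/

/-- The family `φ` of linear maps is an endomorphism of the representation. -/
def IsEndo (φ : ∀ p : Q.V, R.Vtx p →ₗ[ℂ] R.Vtx p) : Prop :=
  ∀ (v : Q.A) (x : R.Vtx (Q.src v)),
    φ (Q.tgt v) (R.arrowApply v x) = R.arrowApply v (φ (Q.src v) x)

/-- The representation is indecomposable: it is nonzero and every idempotent
endomorphism is `0` or the identity. -/
def Indecomposable : Prop :=
  Nonempty R.B ∧
    ∀ φ : ∀ p : Q.V, R.Vtx p →ₗ[ℂ] R.Vtx p, R.IsEndo φ →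
      (∀ p x, φ p (φ p x) = φ p x) →
      (∀ p x, φ p x = 0) ∨ (∀ p x, φ p x = x)

/-- The representation is Schurian: its endomorphism ring is `ℂ`. -/
def Schurian : Prop :=
  ∀ φ : ∀ p : Q.V, R.Vtx p →ₗ[ℂ] R.Vtx p, R.IsEndo φ → ∃ c : ℂ, ∀ p x, φ p x = c • x

/-- `Ext¹(M,M) = 0`, computed by the standard projective resolution for representations
of quivers: the map `(φ_p)_p ↦ (φ_{tgt v} ∘ M_v - M_v ∘ φ_{src v})_v` is surjective. -/
def extVanishes : Prop :=
  ∀ g : ∀ v : Q.A, R.Vtx (Q.src v) →ₗ[ℂ] R.Vtx (Q.tgt v),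
    ∃ φ : ∀ p : Q.V, R.Vtx p →ₗ[ℂ] R.Vtx p,
      ∀ (v : Q.A) (x : R.Vtx (Q.src v)),
        g v x = φ (Q.tgt v) (R.arrowApply v x) - R.arrowApply v (φ (Q.src v) x)

/-- The dimension vector of the representation. -/
def dimVec : Q.V → ℤ := fun p => (Fintype.card {i : R.B // R.F i = p} : ℤ)

/-- The dimension vector of a family of subspaces. -/
def subDimVec (N : R.SubFam) : Q.V → ℤ := fun p => (Module.finrank ℂ (N p) : ℤ)

/-- A quasi-simple (regular simple) subrepresentation: a nonzero subrepresentation of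
defect `0` having no nonzero proper subrepresentation of defect `0`. -/
def IsQuasiSimple (δ : Q.V → ℤ) (N : R.SubFam) : Prop :=
  R.IsSubrep N ∧ (∃ p, N p ≠ ⊥) ∧ eulerForm Q δ (R.subDimVec N) = 0 ∧
    ∀ P : R.SubFam, R.IsSubrep P → (∀ p, P p ≤ N p) → (∃ p, P p ≠ ⊥) → P ≠ N →
      eulerForm Q δ (R.subDimVec P) ≠ 0

/-- The (regular) representation lies in a homogeneous tube: its quasi-socle has
dimension vector `δ`, i.e. it has a quasi-simple subrepresentation of dimension vector
`δ`. -/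
def InHomogeneousTube (δ : Q.V → ℤ) : Prop :=
  ∃ N : R.SubFam, R.IsQuasiSimple δ N ∧ R.subDimVec N = δ

/-- A witness that `β` is contradictory of the second kind: the subquiver `Γ'` of the
coefficient quiver of Section 4.1, consisting of two parallel arms
`k — i_0 — ⋯ — i_s — l` and `k — j_0 — ⋯ — j_s — l` over pairwise distinct arrows
`x, z_0, …, z_{s-1}, y` of `Q`, together with the weight, membership and
"no arrow in between" conditions (2)–(5) of Section 4.1. -/
structure SecondKindWitness (R : BasedRep Q) (β : Finset R.B) where
  s : ℕ
  k : R.B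
  l : R.B
  i : Fin (s + 1) → R.B
  j : Fin (s + 1) → R.B
  x : Q.A
  y : Q.A
  z : Fin s → Q.A
  μ0 : ℂ
  μ1 : ℂ
  ν0 : ℂ
  ν1 : ℂ
  distinct_xy : x ≠ y
  distinct_xz : ∀ e, x ≠ z e
  distinct_yz : ∀ e, y ≠ z e
  z_inj : Function.Injective z
  i_lt_j : ∀ e, i e < j e
  fiber_eq : ∀ e, R.F (i e) = R.F (j e)
  one_weight_zero :
    (μ0 = 0 → μ1 ≠ 0 ∧ ν0 ≠ 0 ∧ ν1 ≠ 0) ∧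
    (μ1 = 0 → μ0 ≠ 0 ∧ ν0 ≠ 0 ∧ ν1 ≠ 0) ∧
    (ν0 = 0 → μ0 ≠ 0 ∧ μ1 ≠ 0 ∧ ν1 ≠ 0) ∧
    (ν1 = 0 → μ0 ≠ 0 ∧ μ1 ≠ 0 ∧ ν0 ≠ 0)
  arr_x :
    (Q.src x = R.F k ∧ R.μ x k (i 0) = μ0 ∧ R.μ x k (j 0) = μ1) ∨
    (Q.tgt x = R.F k ∧ R.μ x (i 0) k = μ0 ∧ R.μ x (j 0) k = μ1)
  arr_y :
    (Q.src y = R.F l ∧ R.μ y l (i (Fin.last s)) = ν0 ∧ R.μ y l (j (Fin.last s)) = ν1) ∨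
    (Q.tgt y = R.F l ∧ R.μ y (i (Fin.last s)) l = ν0 ∧ R.μ y (j (Fin.last s)) l = ν1)
  arr_z : ∀ e : Fin s,
    (R.μ (z e) (i e.castSucc) (i e.succ) = 1 ∧ R.μ (z e) (j e.castSucc) (j e.succ) = 1) ∨
    (R.μ (z e) (i e.succ) (i e.castSucc) = 1 ∧ R.μ (z e) (j e.succ) (j e.castSucc) = 1)
  weights_same :
    ((Q.src x = R.F k ∧ Q.src y = R.F l) ∨ (Q.tgt x = R.F k ∧ Q.tgt y = R.F l)) →
      μ0 * ν1 ≠ μ1 * ν0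
  weights_mixed :
    ((Q.src x = R.F k ∧ Q.tgt y = R.F l) ∨ (Q.tgt x = R.F k ∧ Q.src y = R.F l)) →
      μ0 * ν0 ≠ -(μ1 * ν1)
  mem_i : ∀ e, i e ∉ β
  mem_j : ∀ e, j e ∈ β
  mem_k : k ∈ β ↔ Q.src x = R.F k
  mem_l : l ∈ β ↔ Q.src y = R.F l
  no_between : ∀ (v : Q.A) (s' t' : R.B), R.μ v s' t' ≠ 0 →
    (v = x ∨ v = y ∨ ∃ e, v = z e) →
    ¬ ((v = x ∧ ((s' = k ∧ (t' = i 0 ∨ t' = j 0)) ∨ ((s' = i 0 ∨ s' = j 0) ∧ t' = k))) ∨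
       (v = y ∧ ((s' = l ∧ (t' = i (Fin.last s) ∨ t' = j (Fin.last s))) ∨
          ((s' = i (Fin.last s) ∨ s' = j (Fin.last s)) ∧ t' = l))) ∨
       (∃ e : Fin s, v = z e ∧
          ((s' = i e.castSucc ∧ t' = i e.succ) ∨ (s' = j e.castSucc ∧ t' = j e.succ) ∨
           (s' = i e.succ ∧ t' = i e.castSucc) ∨ (s' = j e.succ ∧ t' = j e.castSucc)))) →
    ∀ jj ∈ insert k (insert l (Finset.image j Finset.univ)),
      ∀ ii ∈ insert k (insert l (Finset.image i Finset.univ)),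
        R.F s' = R.F jj → R.F t' = R.F ii → s' < jj ∨ ii < t'

/-- `β` is contradictory of the second kind. -/
def ContradictorySnd (β : Finset R.B) : Prop :=
  R.ExtrSuccClosed β ∧ Nonempty (R.SecondKindWitness β)

end BasedRep

/-- An isomorphism of representations with chosen bases (as representations, i.e.
disregarding the bases). -/
def RepIso (R R' : BasedRep Q) : Prop :=
  ∃ φ : ∀ p : Q.V, R.Vtx p ≃ₗ[ℂ] R'.Vtx p,
    ∀ (v : Q.A) (x : R.Vtx (Q.src v)),
      φ (Q.tgt v) (R.arrowApply v x) = R'.arrowApply v (φ (Q.src v) x)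

/-! ### The quivers `D̃_n` and the Kronecker quiver -/

/-- First endpoint of the edges of the diagram `D̃_n`; the four outer vertices are
`qa = inl 0`, `qb = inl 1`, `qc = inl 2`, `qd = inl 3`, the central vertices are
`q_i = inr i` for `0 ≤ i ≤ n - 4`. Arrows: `a = inl 0`, `b = inl 1`, `c = inl 2`,
`d = inl 3` and `v_i = inr i` for `0 ≤ i ≤ n - 5`. -/
def dnEnd1 (n : ℕ) : Fin 4 ⊕ Fin (n - 4) → Fin 4 ⊕ Fin (n - 3) := fun a =>
  match a with
  | Sum.inl i => Sum.inl i
  | Sum.inr i => Sum.inr ⟨i.1, by have h := i.isLt; omega⟩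

/-- Second endpoint of the edges of the diagram `D̃_n`. -/
def dnEnd2 (n : ℕ) (hn : 4 ≤ n) : Fin 4 ⊕ Fin (n - 4) → Fin 4 ⊕ Fin (n - 3) := fun a =>
  match a with
  | Sum.inl i =>
      if i.1 ≤ 1 then Sum.inr ⟨0, by omega⟩ else Sum.inr ⟨n - 4, by omega⟩
  | Sum.inr i => Sum.inr ⟨i.1 + 1, by have h := i.isLt; omega⟩

/-- A quiver of extended Dynkin type `D̃_n`, with orientation `ω` (the value of `ω` at an
arrow decides its direction). -/
def dnQuiver (n : ℕ) (hn : 4 ≤ n) (ω : Fin 4 ⊕ Fin (n - 4) → Bool) : QuiverData where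
  V := Fin 4 ⊕ Fin (n - 3)
  A := Fin 4 ⊕ Fin (n - 4)
  fV := inferInstance
  fA := inferInstance
  dV := inferInstance
  dA := inferInstance
  src := fun a => if ω a then dnEnd1 n a else dnEnd2 n hn a
  tgt := fun a => if ω a then dnEnd2 n hn a else dnEnd1 n a

/-- The minimal positive imaginary root `δ` of `D̃_n`: `1` at the outer vertices and `2`
at the central vertices. -/
def dnDelta (n : ℕ) : Fin 4 ⊕ Fin (n - 3) → ℤ := fun p =>
  match p with
  | Sum.inl _ => 1
  | Sum.inr _ => 2

/-- The Kronecker quiver `K(2)`: two vertices and two parallel arrows from the first to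
the second. -/
def kronQuiver : QuiverData where
  V := Fin 2
  A := Fin 2
  fV := inferInstance
  fA := inferInstance
  dV := inferInstance
  dA := inferInstance
  src := fun _ => 0
  tgt := fun _ => 1


end LW

/-!
For `w` in `β`-normal form the columns indexed by `β ∩ B_p` have a unit pivot each and vanish
at the other pivots, so they are linearly independent, their span `N_p` has pivot set exactly
`β ∩ B_p`, and a vector of `M_p` lies in `N_p` iff it is the combination of these columns
with its own pivot coordinates as coefficients. For the image under `M_v` of the column `s`,
the defect of that identity at the coordinate `t` is exactly `E(v,t,s)(w)`. Hence the
`E(v,t,s)` vanish at `w` iff `N` is a subrepresentation, and `N` is the only subrepresentation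
`w` can represent.
-/

section PivotFamily

variable {ι κ K : Type*} [Fintype κ] [Ring K]
  (e : κ → ι → K) (g : κ → ι) (he_self : ∀ j, e j (g j) = 1)
  (he_ne : ∀ j k, j ≠ k → e k (g j) = 0)
include he_self he_ne

theorem sum_smul_apply_pivot (c : κ → K) (j : κ) : (∑ k, c k • e k) (g j) = c j := by
  rw [Finset.sum_apply, Finset.sum_eq_single j (fun k _ hkj => by simp [he_ne j k hkj.symm])
    (by simp)]
  simp [he_self]

theorem linearIndependent_of_pivot : LinearIndependent K e :=
  Fintype.linearIndependent_iff.mpr fun c hc j => by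
    rw [← sum_smul_apply_pivot e g he_self he_ne c j, hc, Pi.zero_apply]

theorem mem_span_range_iff_eq_sum_pivot (x : ι → K) :
    x ∈ Submodule.span K (Set.range e) ↔ x = ∑ k, x (g k) • e k := by
  refine ⟨fun hx => ?_, fun hx => hx ▸ Submodule.sum_mem _ fun k _ =>
    Submodule.smul_mem _ _ (Submodule.subset_span ⟨k, rfl⟩)⟩
  obtain ⟨c, rfl⟩ := (Submodule.mem_span_range_iff_exists_fun K).mp hx
  simp only [sum_smul_apply_pivot e g he_self he_ne]

end PivotFamily

theorem Fintype.sum_subtype_eq_sum_of_eq_zero {α M : Type*} [Fintype α] [AddCommMonoid M]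
    {p : α → Prop} [Fintype (Subtype p)] (f : α → M) (hf : ∀ a, ¬p a → f a = 0) :
    ∑ a : Subtype p, f a = ∑ a, f a := by
  classical
  rw [← Finset.sum_subtype (Finset.univ.filter p) (by simp) f]
  exact Finset.sum_filter_of_ne fun a _ ha => not_not.mp (mt (hf a) ha)

namespace LW.BasedRep

variable {Q : QuiverData} (R : BasedRep Q) (β : Finset R.B) (w : R.B → R.B → ℂ)

def pivotColumns (p : Q.V) : {j : R.B // j ∈ β ∧ R.F j = p} → R.Vtx p :=
  fun k => R.column w k.1 p

def columnSpan : R.SubFam :=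
  fun p => Submodule.span ℂ {x | ∃ j ∈ β, R.F j = p ∧ x = R.column w j p}

theorem columnSpan_eq_span_range (p : Q.V) :
    R.columnSpan β w p = Submodule.span ℂ (Set.range (R.pivotColumns β w p)) := by
  refine congrArg (Submodule.span ℂ) (Set.ext fun x => ?_)
  constructor
  · rintro ⟨j, hj, hjp, rfl⟩
    exact ⟨⟨j, hj, hjp⟩, rfl⟩
  · rintro ⟨⟨j, hj, hjp⟩, rfl⟩
    exact ⟨j, hj, hjp, rfl⟩

variable {R β w}

theorem pivotColumns_apply_self (hw : R.NormalForm β w) (p : Q.V)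
    (j : {j : R.B // j ∈ β ∧ R.F j = p}) : R.pivotColumns β w p j ⟨j.1, j.2.2⟩ = 1 :=
  hw.1 j.1 j.2.1

theorem pivotColumns_apply_of_ne (hw : R.NormalForm β w) (p : Q.V)
    (j k : {j : R.B // j ∈ β ∧ R.F j = p}) (hjk : j ≠ k) :
    R.pivotColumns β w p k ⟨j.1, j.2.2⟩ = 0 :=
  hw.2.1 j.1 j.2.1 k.1 k.2.1 fun h => hjk (Subtype.ext h).symm

theorem linearIndependent_pivotColumns (hw : R.NormalForm β w) (p : Q.V) :
    LinearIndependent ℂ (R.pivotColumns β w p) :=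
  linearIndependent_of_pivot _ _ (pivotColumns_apply_self hw p) (pivotColumns_apply_of_ne hw p)

theorem mem_columnSpan_iff (hw : R.NormalForm β w) {p : Q.V} (x : R.Vtx p) :
    x ∈ R.columnSpan β w p ↔ x = ∑ k, x ⟨k.1, k.2.2⟩ • R.pivotColumns β w p k := by
  rw [columnSpan_eq_span_range]
  exact mem_span_range_iff_eq_sum_pivot _ _ (pivotColumns_apply_self hw p)
    (pivotColumns_apply_of_ne hw p) x

theorem finrank_columnSpan (hw : R.NormalForm β w) (p : Q.V) :
    Module.finrank ℂ (R.columnSpan β w p) = R.typeVec β p := by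
  rw [columnSpan_eq_span_range, finrank_span_eq_card (linearIndependent_pivotColumns hw p),
    Fintype.card_subtype]
  congr 1
  ext
  simp

theorem isPivot_columnSpan_iff (hw : R.NormalForm β w) {p : Q.V}
    (j : {i : R.B // R.F i = p}) :
    R.IsPivot (R.columnSpan β w p) j ↔ j.1 ∈ β := by
  constructor
  · rintro ⟨x, hx, hxj, hx_above⟩
    by_contra hj
    rw [mem_columnSpan_iff hw] at hx
    rw [hx, Finset.sum_apply] at hxj
    obtain ⟨k, -, hk⟩ := Finset.exists_ne_zero_of_sum_ne_zero hxj
    have hwjk : w j.1 k.1 ≠ 0 := right_ne_zero_of_mul hk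
    -- `w j k ≠ 0` puts the pivot `k` weakly above `j` by (NF3), and `k ∈ β` while `j ∉ β`.
    have hjk : j.1 < k.1 :=
      lt_of_le_of_ne (not_lt.mp fun h => hwjk (hw.2.2.1 j.1 k.1 k.2.1 h)) fun h => hj (h ▸ k.2.1)
    exact left_ne_zero_of_mul hk (hx_above ⟨k.1, k.2.2⟩ hjk)
  · intro hj
    refine ⟨R.column w j.1 p, Submodule.subset_span ⟨j.1, hj, j.2, rfl⟩, ?_,
      fun i hi => hw.2.2.1 i.1 j.1 hj hi⟩
    simp [column, hw.1 j.1 hj]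

theorem isMatrixRep_columnSpan (hw : R.NormalForm β w) :
    R.IsMatrixRep β (R.columnSpan β w) w := by
  refine ⟨hw.2.2.2.1, fun i j hij => ?_, fun _ => rfl, linearIndependent_pivotColumns hw⟩
  by_cases hj : j ∈ β
  · exact hw.2.2.2.2 i j hj hij
  · exact hw.2.2.2.1 i j hj

variable (R w)

theorem arrowApply_column (v : Q.A) (s : R.B) (t : {i : R.B // R.F i = Q.tgt v}) :
    R.arrowApply v (R.column w s (Q.src v)) t = ∑ s', R.μ v s' t * w s' s := by
  unfold arrowApply column
  exact Fintype.sum_subtype_eq_sum_of_eq_zero (fun s' => R.μ v s' t * w s' s) fun s' hs' =>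
    mul_eq_zero_of_left (not_imp_comm.mp (R.μ_src v s' t) hs') _

def arrowLin (v : Q.A) : R.Vtx (Q.src v) →ₗ[ℂ] R.Vtx (Q.tgt v) where
  toFun := R.arrowApply v
  map_add' x y := funext fun j => by
    simp [arrowApply, mul_add, Finset.sum_add_distrib]
  map_smul' a x := funext fun j => by
    simp [arrowApply, Finset.mul_sum, mul_left_comm]

variable {R w}

theorem Efun_eq_sub (hw : R.NormalForm β w) {v : Q.A} {t : R.B} (ht : R.F t = Q.tgt v) (s : R.B) :
    R.Efun v t s w =
      (∑ k, R.arrowApply v (R.column w s (Q.src v)) ⟨k.1, k.2.2⟩ •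
        R.pivotColumns β w (Q.tgt v) k) ⟨t, ht⟩ -
      R.arrowApply v (R.column w s (Q.src v)) ⟨t, ht⟩ := by
  have hw_row : ∀ t', ¬(t' ∈ β ∧ R.F t' = Q.tgt v) → w t t' = 0 := fun t' ht' => by
    by_cases hβ : t' ∈ β
    · exact hw.2.2.2.2 t t' hβ fun h => ht' ⟨hβ, h ▸ ht⟩
    · exact hw.2.2.2.1 t t' hβ
  calc R.Efun v t s w
      = ∑ t', (∑ s', R.μ v s' t' * w s' s) * w t t' - ∑ s', R.μ v s' t * w s' s := by
        unfold Efun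
        rw [Finset.sum_comm]
        congr 1
        refine Finset.sum_congr rfl fun t' _ => ?_
        rw [Finset.sum_mul]
        exact Finset.sum_congr rfl fun s' _ => by ring
    _ = ∑ k : {k : R.B // k ∈ β ∧ R.F k = Q.tgt v}, (∑ s', R.μ v s' k * w s' s) * w t k -
          ∑ s', R.μ v s' t * w s' s := by
        rw [Fintype.sum_subtype_eq_sum_of_eq_zero (p := fun k => k ∈ β ∧ R.F k = Q.tgt v)
          (fun t' => (∑ s', R.μ v s' t' * w s' s) * w t t')
          fun t' ht' => by rw [hw_row t' ht', mul_zero]]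
    _ = _ := by
        simp only [Finset.sum_apply, Pi.smul_apply, smul_eq_mul, arrowApply_column,
          pivotColumns, column, mul_comm]

theorem forall_Efun_eq_zero_iff (hw : R.NormalForm β w) (v : Q.A) (s : R.B) :
    (∀ t, R.F t = Q.tgt v → R.Efun v t s w = 0) ↔
      R.arrowApply v (R.column w s (Q.src v)) ∈ R.columnSpan β w (Q.tgt v) := by
  rw [mem_columnSpan_iff hw, funext_iff, Subtype.forall]
  refine forall_congr' fun t => forall_congr' fun ht => ?_
  rw [Efun_eq_sub hw ht, sub_eq_zero, eq_comm]

theorem isSubrep_columnSpan_iff (hw : R.NormalForm β w) :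
    R.IsSubrep (R.columnSpan β w) ↔ ∀ v s, R.F s = Q.src v →
      R.arrowApply v (R.column w s (Q.src v)) ∈ R.columnSpan β w (Q.tgt v) := by
  constructor
  · intro hsub v s hs
    by_cases hβ : s ∈ β
    · exact hsub v _ (Submodule.subset_span ⟨s, hβ, hs, rfl⟩)
    · have hcol : R.column w s (Q.src v) = 0 := funext fun i => hw.2.2.2.1 i.1 s hβ
      change R.arrowLin v _ ∈ _
      rw [hcol, map_zero]
      exact Submodule.zero_mem _
  · intro hgen v x hx
    refine (Submodule.span_le
      (p := (R.columnSpan β w (Q.tgt v)).comap (R.arrowLin v))).mpr ?_ hx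
    rintro _ ⟨s, -, hs, rfl⟩
    exact hgen v s hs

theorem isSubrep_columnSpan_iff_forall_Efun_eq_zero (hw : R.NormalForm β w) :
    R.IsSubrep (R.columnSpan β w) ↔ ∀ v t s, R.F t = Q.tgt v → R.F s = Q.src v →
      R.Efun v t s w = 0 := by
  simp only [isSubrep_columnSpan_iff hw, ← forall_Efun_eq_zero_iff hw]
  exact ⟨fun h v t s ht hs => h v s hs t ht, fun h v s hs t ht => h v t s ht hs⟩

end LW.BasedRep

namespace LW

/-- Lemma 1.2.  Let `ι_β : C_β^M → Mat_{B×B}(ℂ)` be the injection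
sending a point of the Schubert cell to its unique matrix representation in `β`-normal
form.  Then the image of `ι_β` is the intersection of the vanishing set `V(M,B)` of the
polynomials `E(v,t,s)` with the solution set of (NF1)–(NF5): a matrix `w` in `β`-normal
form lies in the image of `ι_β` if and only if `E(v,t,s)(w) = 0` for all arrows
`v : p → q` of `Q` and all `s ∈ F⁻¹(p)`, `t ∈ F⁻¹(q)`. -/
theorem image_of_schubert_cell_is_cut_out_by_E
    (Q : QuiverData) (R : BasedRep Q) (β : Finset R.B)
    (w : R.B → R.B → ℂ) (hw : R.NormalForm β w) :
    (∃ N ∈ R.schubertCell (R.typeVec β) β, R.IsMatrixRep β N w) ↔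
      ∀ (v : Q.A) (t s : R.B), R.F t = Q.tgt v → R.F s = Q.src v →
        R.Efun v t s w = 0 := by
  rw [← BasedRep.isSubrep_columnSpan_iff_forall_Efun_eq_zero hw]
  constructor
  · rintro ⟨N, hN, hrep⟩
    obtain rfl : N = R.columnSpan β w := funext hrep.2.2.1
    exact hN.1.1
  · intro hsub
    exact ⟨R.columnSpan β w, ⟨⟨hsub, BasedRep.finrank_columnSpan hw⟩,
      fun p j => (BasedRep.isPivot_columnSpan_iff hw j).symm⟩,
      BasedRep.isMatrixRep_columnSpan hw⟩

end LW
end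
end

section
/- Let M be a thin complex representation of a quiver Q with ordered basis B. Then the reduced Schubert system Σ̄(M,B) is trivial, and for every dimension vector e the Schubert decomposition Gr_e(M) = ∐_β C_β^M is a decomposition into affine spaces. More precisely, Gr_e(M) is a point if there exists an extremal successor closed subset β ⊆ B of type e, and Gr_e(M) is empty otherwise. -/
/-!
Common framework for formalizing "Quiver Grassmannians of type D̃_n, Part 1"
(Lorscheid–Weist).

A quiver is given by finite vertex and arrow types with source and target maps.
A complex representation `M` of a quiver together with a chosen ordered basis `B`
is encoded by the data of the basis: a finite linearly ordered type `B`, a map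
`F : B → Q.V` recording over which vertex each basis vector lies, and the matrix
coefficients `μ v i j` of the structure maps, i.e. `M_v(i) = ∑ j, μ v i j • j`.
-/

open scoped Classical

noncomputable section

namespace LW

variable {Q : QuiverData}

/-!
A thin representation has `dim M_p ≤ 1` at every vertex, so every subspace of `M_p` is `0` or
`M_p`, every arrow of the coefficient quiver is extremal, and there are no relevant pairs
`(i, j)` with `i < j`; this empties the reduced Schubert system. A subrepresentation `N` is
then determined by the set of basis vectors lying over the vertices where `N ≠ 0`: this set
has the type of `N` and is extremal successor closed exactly because `N` is a
subrepresentation. A nonempty Schubert cell `C_β` therefore contains only the subrepresentation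
spanned by `β`, and its matrix model is the single diagonal `0/1` matrix supported on `β`.
-/

theorem _root_.Submodule.eq_bot_or_eq_top_of_finrank_le_one {K V : Type*} [DivisionRing K]
    [AddCommGroup V] [Module K V] [FiniteDimensional K V] (hV : Module.finrank K V ≤ 1)
    (S : Submodule K V) : S = ⊥ ∨ S = ⊤ := by
  rcases Nat.eq_zero_or_pos (Module.finrank K S) with h | h
  · exact Or.inl (Submodule.finrank_eq_zero.mp h)
  · exact Or.inr (Submodule.eq_top_of_finrank_eq (by have := S.finrank_le; omega))

namespace BasedRep

variable {R : BasedRep Q}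

/-- For thin `M`, the span of the basis vectors in `β`. -/
def subrepOf (β : Finset R.B) : R.SubFam :=
  fun p => if p ∈ β.image R.F then ⊤ else ⊥

def supportBasis (N : R.SubFam) : Finset R.B :=
  Finset.univ.filter fun j => N (R.F j) ≠ ⊥

theorem subrepOf_apply_of_mem {β : Finset R.B} {p : Q.V} (h : p ∈ β.image R.F) :
    R.subrepOf β p = ⊤ :=
  if_pos h

theorem subrepOf_apply_of_notMem {β : Finset R.B} {p : Q.V} (h : p ∉ β.image R.F) :
    R.subrepOf β p = ⊥ :=
  if_neg h

theorem subsingleton_fiber (hR : Function.Injective R.F) (p : Q.V) :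
    Subsingleton {i : R.B // R.F i = p} :=
  ⟨fun a b => Subtype.ext (hR (a.2.trans b.2.symm))⟩

theorem finrank_vtx_le_one (hR : Function.Injective R.F) (p : Q.V) :
    Module.finrank ℂ (R.Vtx p) ≤ 1 := by
  have := subsingleton_fiber hR p
  rw [Module.finrank_pi]
  exact Fintype.card_le_one_iff_subsingleton.mpr inferInstance

theorem submodule_eq_bot_or_eq_top (hR : Function.Injective R.F) {p : Q.V}
    (S : Submodule ℂ (R.Vtx p)) : S = ⊥ ∨ S = ⊤ :=
  S.eq_bot_or_eq_top_of_finrank_le_one (finrank_vtx_le_one hR p)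

theorem extremalArrow_of_injective (hR : Function.Injective R.F) {v : Q.A} {s t : R.B}
    (h : R.μ v s t ≠ 0) : R.ExtremalArrow v s t := by
  refine ⟨h, fun s' t' h' hne => absurd ?_ hne⟩
  rw [hR ((R.μ_src v s' t' h').trans (R.μ_src v s t h).symm),
    hR ((R.μ_tgt v s' t' h').trans (R.μ_tgt v s t h).symm)]

theorem rel2lt_eq_empty (hR : Function.Injective R.F) : R.Rel2lt = ∅ :=
  Set.eq_empty_of_forall_notMem fun _ ⟨hF, hlt⟩ => hlt.ne (hR hF)

theorem rel3red_eq_empty (hR : Function.Injective R.F) : R.Rel3red = ∅ := by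
  refine Set.eq_empty_of_forall_notMem ?_
  rintro ⟨v, t, s⟩ ⟨⟨ht, hs, s', t', hμ, -, -⟩, hnot⟩
  obtain rfl : s' = s := hR ((R.μ_src _ _ _ hμ).trans hs.symm)
  obtain rfl : t' = t := hR ((R.μ_tgt _ _ _ hμ).trans ht.symm)
  exact hnot (extremalArrow_of_injective hR hμ)

theorem redWeight_eq_zero (hR : Function.Injective R.F) (y : Q.A × R.B × R.B)
    (S : Finset (R.B × R.B)) : R.redWeight y S = 0 := by
  rw [redWeight, rel3red_eq_empty hR]
  exact if_neg fun h => h.1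

theorem arrowApply_apply (hR : Function.Injective R.F) (v : Q.A) (x : R.Vtx (Q.src v))
    {s : R.B} (hs : R.F s = Q.src v) (j : {i : R.B // R.F i = Q.tgt v}) :
    R.arrowApply v x j = R.μ v s j.1 * x ⟨s, hs⟩ := by
  have := subsingleton_fiber hR (Q.src v)
  have : Unique {i : R.B // R.F i = Q.src v} := uniqueOfSubsingleton ⟨s, hs⟩
  unfold arrowApply
  rw [Fintype.sum_unique, Subsingleton.elim default ⟨s, hs⟩]

theorem finrank_subrepOf (hR : Function.Injective R.F) (β : Finset R.B) (p : Q.V) :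
    Module.finrank ℂ (R.subrepOf β p) = (β.filter fun i => R.F i = p).card := by
  by_cases h : p ∈ β.image R.F
  · rw [subrepOf_apply_of_mem h]
    obtain ⟨j, hj, rfl⟩ := Finset.mem_image.mp h
    have := subsingleton_fiber hR (R.F j)
    rw [finrank_top, Module.finrank_pi, Fintype.card_eq_one_iff.mpr
      ⟨⟨j, rfl⟩, fun _ => Subsingleton.elim _ _⟩, eq_comm, Finset.card_eq_one]
    refine ⟨j, Finset.ext fun a => ?_⟩
    simp only [Finset.mem_filter, Finset.mem_singleton]
    exact ⟨fun ha => hR ha.2, by rintro rfl; exact ⟨hj, rfl⟩⟩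
  · rw [subrepOf_apply_of_notMem h, finrank_bot, eq_comm, Finset.card_eq_zero,
      Finset.filter_eq_empty_iff]
    exact fun a ha haF => h (Finset.mem_image.mpr ⟨a, ha, haF⟩)

theorem isSubrep_subrepOf_iff (hR : Function.Injective R.F) (β : Finset R.B) :
    R.IsSubrep (R.subrepOf β) ↔ R.ExtrSuccClosed β := by
  constructor
  · intro hsub v s t hst hs
    have hFs := R.μ_src v s t hst.1
    have hFt := R.μ_tgt v s t hst.1
    have hy := hsub v (fun _ => 1) (by
      rw [← hFs, subrepOf_apply_of_mem (Finset.mem_image_of_mem _ hs)]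
      exact Submodule.mem_top)
    by_contra ht
    have ht' : Q.tgt v ∉ β.image R.F := hFt ▸ hR.mem_finset_image.not.mpr ht
    rw [subrepOf_apply_of_notMem ht', Submodule.mem_bot] at hy
    exact hst.1 (by simpa [arrowApply_apply hR v _ hFs ⟨t, hFt⟩] using congrFun hy ⟨t, hFt⟩)
  · intro hβ v x hx
    by_cases ht : Q.tgt v ∈ β.image R.F
    · rw [subrepOf_apply_of_mem ht]
      exact Submodule.mem_top
    rw [subrepOf_apply_of_notMem ht, Submodule.mem_bot]
    funext j
    refine Finset.sum_eq_zero fun i _ => ?_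
    by_cases hμ : R.μ v i.1 j.1 = 0
    · rw [hμ, zero_mul]
    have hi : i.1 ∉ β := fun hi => ht <| j.2 ▸
      hR.mem_finset_image.mpr (hβ v i.1 j.1 (extremalArrow_of_injective hR hμ) hi)
    have hs : Q.src v ∉ β.image R.F := i.2 ▸ hR.mem_finset_image.not.mpr hi
    rw [subrepOf_apply_of_notMem hs, Submodule.mem_bot] at hx
    simp [hx]

theorem subrepOf_mem_grassmannian_iff (hR : Function.Injective R.F) (e : Q.V → ℕ)
    (β : Finset R.B) :
    R.subrepOf β ∈ R.grassmannian e ↔ R.IsType e β ∧ R.ExtrSuccClosed β := by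
  simp only [grassmannian, Set.mem_ofPred_eq, finrank_subrepOf hR, isSubrep_subrepOf_iff hR,
    IsType]
  exact and_comm

theorem subrepOf_supportBasis (hR : Function.Injective R.F) (N : R.SubFam) :
    R.subrepOf (R.supportBasis N) = N := by
  funext p
  by_cases h : p ∈ (R.supportBasis N).image R.F
  · obtain ⟨j, hj, rfl⟩ := Finset.mem_image.mp h
    rw [subrepOf_apply_of_mem h]
    exact ((submodule_eq_bot_or_eq_top hR _).resolve_left (Finset.mem_filter.mp hj).2).symm
  rw [subrepOf_apply_of_notMem h]
  rcases submodule_eq_bot_or_eq_top hR (N p) with hN | hN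
  · exact hN.symm
  rcases isEmpty_or_nonempty {i : R.B // R.F i = p} with hp | ⟨j, rfl⟩
  · exact Subsingleton.elim _ _
  have hne : N (R.F j) ≠ ⊥ := (Submodule.ne_bot_iff _).mpr
    ⟨fun _ => 1, hN ▸ Submodule.mem_top, fun h0 => one_ne_zero (congrFun h0 ⟨j, rfl⟩)⟩
  exact absurd (Finset.mem_image_of_mem _ (Finset.mem_filter.mpr ⟨Finset.mem_univ j, hne⟩)) h

theorem grassmannian_eq_image (hR : Function.Injective R.F) (e : Q.V → ℕ) :
    R.grassmannian e = R.subrepOf '' {β | R.IsType e β ∧ R.ExtrSuccClosed β} := by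
  ext N
  refine ⟨fun hN => ⟨R.supportBasis N, ?_, subrepOf_supportBasis hR N⟩, ?_⟩
  · rwa [Set.mem_ofPred_eq, ← subrepOf_mem_grassmannian_iff hR, subrepOf_supportBasis hR]
  · rintro ⟨β, hβ, rfl⟩
    exact (subrepOf_mem_grassmannian_iff hR e β).mpr hβ

theorem submodule_eq_of_finrank_eq (hR : Function.Injective R.F) {p : Q.V}
    {S S' : Submodule ℂ (R.Vtx p)} (h : Module.finrank ℂ S = Module.finrank ℂ S') :
    S = S' := by
  rcases submodule_eq_bot_or_eq_top hR S with rfl | rfl <;>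
    rcases submodule_eq_bot_or_eq_top hR S' with rfl | rfl
  · rfl
  · exact (Submodule.finrank_eq_zero.mp (h.symm.trans (finrank_bot ℂ _))).symm
  · exact Submodule.finrank_eq_zero.mp (h.trans (finrank_bot ℂ _))
  · rfl

theorem grassmannian_subsingleton (hR : Function.Injective R.F) (e : Q.V → ℕ) :
    (R.grassmannian e).Subsingleton :=
  fun _ hN _ hN' => funext fun p => submodule_eq_of_finrank_eq hR ((hN.2 p).trans (hN'.2 p).symm)

theorem isPivot_iff_ne_bot (hR : Function.Injective R.F) {p : Q.V}
    (W : Submodule ℂ (R.Vtx p)) (j : {i : R.B // R.F i = p}) : R.IsPivot W j ↔ W ≠ ⊥ := by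
  have := subsingleton_fiber hR p
  refine ⟨fun ⟨x, hx, hxj, _⟩ =>
    (Submodule.ne_bot_iff W).mpr ⟨x, hx, fun h => hxj (by simp [h])⟩, fun hW => ?_⟩
  obtain ⟨x, hx, hx0⟩ := (Submodule.ne_bot_iff W).mp hW
  refine ⟨x, hx, fun hxj => hx0 (funext fun i => ?_), fun i hi => ?_⟩
  · rwa [Subsingleton.elim i j]
  · exact absurd (Subsingleton.elim i j ▸ hi) (lt_irrefl _)

theorem eq_subrepOf_of_mem_schubertCell (hR : Function.Injective R.F) {e : Q.V → ℕ}
    {β : Finset R.B} {N : R.SubFam} (hN : N ∈ R.schubertCell e β) : N = R.subrepOf β := by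
  have hsupp : R.supportBasis N = β := Finset.ext fun j => by
    rw [supportBasis, Finset.mem_filter, hN.2 (R.F j) ⟨j, rfl⟩, isPivot_iff_ne_bot hR]
    exact and_iff_right (Finset.mem_univ j)
  rw [← hsupp, subrepOf_supportBasis hR]

theorem span_singleton_eq_top (hR : Function.Injective R.F) {p : Q.V} {x : R.Vtx p}
    (j : {i : R.B // R.F i = p}) (hx : x j ≠ 0) : Submodule.span ℂ {x} = ⊤ :=
  (submodule_eq_bot_or_eq_top hR _).resolve_left fun h =>
    hx (by rw [Submodule.span_singleton_eq_bot.mp h, Pi.zero_apply])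

theorem normalForm_diagonal_indicator (β : Finset R.B) :
    R.NormalForm β (Matrix.diagonal ((β : Set R.B).indicator 1)) := by
  refine ⟨fun i hi => ?_, fun i _ j _ hji => ?_, fun i j _ hji => ?_, fun i j hj => ?_,
    fun i j _ hF => ?_⟩
  · simp [hi]
  · exact Matrix.diagonal_apply_ne _ hji.symm
  · exact Matrix.diagonal_apply_ne _ hji.ne'
  · obtain rfl | hij := eq_or_ne i j
    · simp [hj]
    · exact Matrix.diagonal_apply_ne _ hij
  · exact Matrix.diagonal_apply_ne _ fun h => hF (congrArg R.F h)

theorem eq_diagonal_indicator_of_normalForm (hR : Function.Injective R.F) {β : Finset R.B}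
    {w : R.B → R.B → ℂ} (hw : R.NormalForm β w) :
    w = Matrix.diagonal ((β : Set R.B).indicator 1) := by
  obtain ⟨hdiag, -, -, hout, hfiber⟩ := hw
  funext i j
  obtain rfl | hij := eq_or_ne i j
  · by_cases hi : i ∈ β
    · simp [hdiag i hi, hi]
    · simp [hout i i hi, hi]
  · by_cases hj : j ∈ β
    · rw [hfiber i j hj fun hF => hij (hR hF), Matrix.diagonal_apply_ne _ hij]
    · rw [hout i j hj, Matrix.diagonal_apply_ne _ hij]

theorem span_column_diagonal_indicator (hR : Function.Injective R.F) (β : Finset R.B)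
    (p : Q.V) :
    Submodule.span ℂ {x : R.Vtx p | ∃ j ∈ β, R.F j = p ∧
      x = R.column (Matrix.diagonal ((β : Set R.B).indicator 1)) j p} = R.subrepOf β p := by
  by_cases h : p ∈ β.image R.F
  · obtain ⟨j, hj, rfl⟩ := Finset.mem_image.mp h
    rw [subrepOf_apply_of_mem h, eq_top_iff, ← span_singleton_eq_top hR ⟨j, rfl⟩
      (x := R.column (Matrix.diagonal ((β : Set R.B).indicator 1)) j (R.F j))
      (by simp [column, hj])]
    exact Submodule.span_mono (Set.singleton_subset_iff.mpr ⟨j, hj, rfl, rfl⟩)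
  · rw [subrepOf_apply_of_notMem h, Submodule.span_eq_bot]
    rintro x ⟨j, hj, rfl, -⟩
    exact absurd (Finset.mem_image_of_mem R.F hj) h

theorem isMatrixRep_diagonal_indicator (hR : Function.Injective R.F) {e : Q.V → ℕ}
    {β : Finset R.B} {N : R.SubFam} (hN : N ∈ R.schubertCell e β) :
    R.IsMatrixRep β N (Matrix.diagonal ((β : Set R.B).indicator 1)) := by
  obtain ⟨-, -, -, hout, -⟩ := R.normalForm_diagonal_indicator β
  refine ⟨hout, fun i j hF => Matrix.diagonal_apply_ne _ fun h => hF (congrArg R.F h),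
    fun p => ?_, fun p => ?_⟩
  · rw [span_column_diagonal_indicator hR, eq_subrepOf_of_mem_schubertCell hR hN]
  · have : Subsingleton {j : R.B // j ∈ β ∧ R.F j = p} :=
      ⟨fun a b => Subtype.ext (hR (a.2.2.trans b.2.2.symm))⟩
    rw [linearIndependent_subsingleton_index_iff]
    rintro ⟨j, hj, rfl⟩ h0
    simpa [column, hj] using congrFun h0 ⟨j, rfl⟩

theorem cellMatrixModel_eq_singleton (hR : Function.Injective R.F) {e : Q.V → ℕ}
    {β : Finset R.B} {N : R.SubFam} (hN : N ∈ R.schubertCell e β) :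
    R.cellMatrixModel e β = {Matrix.diagonal ((β : Set R.B).indicator 1)} :=
  Set.eq_singleton_iff_unique_mem.mpr
    ⟨⟨R.normalForm_diagonal_indicator β, N, hN, isMatrixRep_diagonal_indicator hR hN⟩,
      fun _ hw => eq_diagonal_indicator_of_normalForm hR hw.1⟩

theorem isAffineSpaceDim_singleton (w : R.B → R.B → ℂ) : R.IsAffineSpaceDim {w} 0 :=
  ⟨fun _ => w, fun _ => Fin.elim0, fun i j => ⟨MvPolynomial.C (w i j), fun _ => by simp⟩,
    fun k => k.elim0, Set.range_const, fun _ => funext fun k => k.elim0⟩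

theorem decompIntoAffine (hR : Function.Injective R.F) (e : Q.V → ℕ) :
    R.DecompIntoAffine e := by
  intro β _
  rcases (R.schubertCell e β).eq_empty_or_nonempty with h | ⟨N, hN⟩
  · exact Or.inl h
  · exact Or.inr ⟨0, cellMatrixModel_eq_singleton hR hN ▸ isAffineSpaceDim_singleton _⟩

end BasedRep

/-- Corollary 2.17.  Let `M` be a thin representation of `Q` with
ordered basis `B`.  Then the reduced Schubert system `Σ̄(M,B)` is trivial (it has no
vertices, edges or links), and for every dimension vector `e` the Schubert decomposition
`Gr_e(M) = ∐_β C_β^M` is a decomposition into affine spaces.  More precisely, `Gr_e(M)`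
is a point if there exists an extremal successor closed `β ⊆ B` of type `e`, and
`Gr_e(M)` is empty otherwise. -/
theorem thin_representations_trivial_reduced_system
    (Q : QuiverData) (R : BasedRep Q)
    (hthin : ∀ i j : R.B, R.F i = R.F j → i = j) :
    (R.Rel2lt = ∅ ∧ R.Rel3red = ∅ ∧ ∀ y S, R.redWeight y S = 0) ∧
    (∀ e : Q.V → ℕ, R.DecompIntoAffine e) ∧
    ∀ e : Q.V → ℕ,
      ((∃ β : Finset R.B, R.IsType e β ∧ R.ExtrSuccClosed β) →
        ∃! N, N ∈ R.grassmannian e) ∧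
      ((¬ ∃ β : Finset R.B, R.IsType e β ∧ R.ExtrSuccClosed β) →
        R.grassmannian e = ∅) := by
  have hR : Function.Injective R.F := hthin
  refine ⟨⟨BasedRep.rel2lt_eq_empty hR, BasedRep.rel3red_eq_empty hR,
    BasedRep.redWeight_eq_zero hR⟩, BasedRep.decompIntoAffine hR,
    fun e => ⟨fun ⟨β, hβ⟩ => ?_, fun hno => ?_⟩⟩
  · have hmem := (BasedRep.subrepOf_mem_grassmannian_iff hR e β).mpr hβ
    exact ⟨R.subrepOf β, hmem, fun _ hN => BasedRep.grassmannian_subsingleton hR e hN hmem⟩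
  · rw [BasedRep.grassmannian_eq_image hR, Set.image_eq_empty]
    exact Set.eq_empty_of_forall_notMem fun β hβ => hno ⟨β, hβ⟩

end LW
end
end

section
/- Let Ξ be a system (a bipartite graph with pair and triple vertices, links and nonzero complex weights). If Ξ admits a patchwork solution, then Ξ is solvable. -/
/-!
Common framework for formalizing "Quiver Grassmannians of type D̃_n, Part 1"
(Lorscheid–Weist).

A quiver is given by finite vertex and arrow types with source and target maps.
A complex representation `M` of a quiver together with a chosen ordered basis `B`
is encoded by the data of the basis: a finite linearly ordered type `B`, a map
`F : B → Q.V` recording over which vertex each basis vector lies, and the matrix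
coefficients `μ v i j` of the structure maps, i.e. `M_v(i) = ∑ j, μ v i j • j`.
-/

open scoped Classical

noncomputable section

namespace LW

variable {Q : QuiverData}

/-!
Let `A` be the union of the orientations of the patches. Along an oriented path of `A`,
the index of the patch containing the current vertex can only grow: leaving a pair `π`
towards a triple of `Ξ_l`, (P3) places `π` in some `Ξ_m` with `m ≤ l`, and (PS) bounds the
index of the patch orienting an edge towards `π` by `m`. Hence an oriented cycle stays in
a single patch `Ξ_k`, where it is an oriented cycle of the solution of `Ξ_k`. The
conditions (S1) and (S2) for `A` hold because (P2), resp. (PS), make unique the patch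
orienting an edge away from a given triple, resp. towards a given pair.
-/

theorem _root_.Relation.TransGen.fiber_of_monotone {α β : Type*} [PartialOrder β]
    {r : α → α → Prop} {f : α → β} (hf : ∀ ⦃a b⦄, r a b → f a ≤ f b) {a b : α}
    (h : Relation.TransGen r a b) (hba : f b ≤ f a) :
    Relation.TransGen (fun x y => r x y ∧ f x = f a ∧ f y = f a) a b := by
  induction h with
  | single hab =>
    exact .single ⟨hab, rfl, le_antisymm hba (hf hab)⟩
  | @tail b c hab hbc ih =>
    have hab' : f a ≤ f b := by
      simpa only [Relation.transGen_eq_self] using hab.lift f fun _ _ h => hf h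
    have hfb : f b = f a := le_antisymm ((hf hbc).trans hba) hab'
    exact .tail (ih hfb.le) ⟨hbc, hfb, le_antisymm hba (hab'.trans (hf hbc))⟩

section Patches

variable {P T : Type} {pairs : Set P} {triples : Set T} {w : T → Finset P → ℂ}
  {P' : Set P} {T' : Set T} {τ : T} {π : P} {S : Finset P}

theorem clipW_ne_zero (h : clipW P' T' w τ S ≠ 0) : τ ∈ T' ∧ ↑S ⊆ P' ∧ w τ S ≠ 0 := by
  by_cases hS : τ ∈ T' ∧ ↑S ⊆ P'
  · simp_all [clipW]
  · simp [clipW, hS] at h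

theorem edgeOf_of_edgeOf_clipW (h : edgeOf (clipW P' T' w) τ π) :
    τ ∈ T' ∧ π ∈ P' ∧ edgeOf w τ π := by
  obtain ⟨S, hS, hπ⟩ := h
  obtain ⟨hτ, hSP, hw⟩ := clipW_ne_zero hS
  exact ⟨hτ, hSP hπ, S, hw, hπ⟩

theorem IsPatchOf.clipW_eq (hp : IsPatchOf pairs triples w P' T') (hτ : τ ∈ T')
    (hπ : π ∈ P') (hπS : π ∈ S) (hw : w τ S ≠ 0) : clipW P' T' w τ S = w τ S :=
  if_pos ⟨hτ, fun _ hx => hp.2.2 τ hτ S hw ⟨π, hπS, hπ⟩ _ hx⟩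

theorem IsPatchOf.edgeOf_clipW (hp : IsPatchOf pairs triples w P' T') (hτ : τ ∈ T')
    (hπ : π ∈ P') (h : edgeOf w τ π) : edgeOf (clipW P' T' w) τ π := by
  obtain ⟨S, hw, hπS⟩ := h
  exact ⟨S, hp.clipW_eq hτ hπ hπS hw ▸ hw, hπS⟩

theorem IsPatchOf.simplyLinked_of_clipW (hp : IsPatchOf pairs triples w P' T')
    (hτ : τ ∈ T') (hπ : π ∈ P') (h : SimplyLinked (clipW P' T' w) τ π) :
    SimplyLinked w τ π := by
  refine ⟨fun h0 => h.1 ?_, fun S hπS hS => by_contra fun hw => ?_⟩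
  · simp [clipW, h0]
  · exact hw (hp.clipW_eq hτ hπ hπS hw ▸ h.2 S hπS hS)

end Patches

section Patchworks

variable {P T I : Type} [PartialOrder I] {pairs : Set P} {triples : Set T}
  {w : T → Finset P → ℂ} {pw : Patchwork pairs triples w I} {Aw : I → Set (T × P)}
  {k l : I} {τ τ' : T} {π : P}

theorem Patchwork.eq_of_mem_pTriples (hk : τ ∈ pw.pTriples k) (hl : τ ∈ pw.pTriples l) :
    k = l :=
  by_contra fun hkl => pw.disjT k l hkl τ hk hl

variable (pw Aw) in
/-- The index of the patch containing a triple, resp. of the patch orienting an edge towards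
a pair (unique by (PS)); `⊥` if there is none. -/
def patchLevel : T ⊕ P → WithBot I
  | .inl τ => if h : ∃ k, τ ∈ pw.pTriples k then h.choose else ⊥
  | .inr π => if h : ∃ k τ, (τ, π) ∈ Aw k then h.choose else ⊥

theorem patchLevel_inl_eq_coe_iff : patchLevel pw Aw (.inl τ) = k ↔ τ ∈ pw.pTriples k := by
  refine ⟨fun h => ?_, fun hk => ?_⟩
  · dsimp only [patchLevel] at h
    split_ifs at h with hτ
    · exact WithBot.coe_injective h ▸ hτ.choose_spec
    · exact absurd h WithBot.bot_ne_coe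
  · have hτ : ∃ k, τ ∈ pw.pTriples k := ⟨k, hk⟩
    simp only [patchLevel, dif_pos hτ]
    exact congrArg _ (Patchwork.eq_of_mem_pTriples hτ.choose_spec hk)

namespace IsPatchworkSolution

theorem mem_of_mem (hsol : IsPatchworkSolution pw Aw) (h : (τ, π) ∈ Aw k) :
    τ ∈ pw.pTriples k ∧ π ∈ pw.pPairs k ∧ edgeOf w τ π :=
  edgeOf_of_edgeOf_clipW ((hsol.1 k).mem_edge τ π h)

theorem eq_of_mem_of_mem (hsol : IsPatchworkSolution pw Aw) (hk : (τ, π) ∈ Aw k)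
    (hl : (τ', π) ∈ Aw l) : k = l :=
  le_antisymm (hsol.2 k l τ π hk (hsol.mem_of_mem hl).2.1)
    (hsol.2 l k τ' π hl (hsol.mem_of_mem hk).2.1)

theorem le_of_mem_of_edgeOf (hsol : IsPatchworkSolution pw Aw) (hk : (τ, π) ∈ Aw k)
    (hτ' : τ' ∈ pw.pTriples l) (h : edgeOf w τ' π) : k ≤ l := by
  obtain ⟨m, hml, hπ⟩ := pw.p3 l τ' π hτ' h
  exact (hsol.2 k m τ π hk hπ).trans hml

theorem patchLevel_inr_eq_coe_iff (hsol : IsPatchworkSolution pw Aw) :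
    patchLevel pw Aw (.inr π) = k ↔ ∃ τ, (τ, π) ∈ Aw k := by
  refine ⟨fun h => ?_, fun ⟨τ, hk⟩ => ?_⟩
  · dsimp only [patchLevel] at h
    split_ifs at h with hπ
    · exact WithBot.coe_injective h ▸ hπ.choose_spec
    · exact absurd h WithBot.bot_ne_coe
  · have hπ : ∃ k τ, (τ, π) ∈ Aw k := ⟨k, τ, hk⟩
    simp only [patchLevel, dif_pos hπ]
    obtain ⟨τ', hk'⟩ := hπ.choose_spec
    exact congrArg _ (hsol.eq_of_mem_of_mem hk' hk)

theorem patchLevel_le_of_solStep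
    (hsupp : ∀ (τ : T) (S : Finset P), w τ S ≠ 0 → τ ∈ triples ∧ ∀ π ∈ S, π ∈ pairs)
    (hsol : IsPatchworkSolution pw Aw) ⦃x y : T ⊕ P⦄ (h : solStep w (⋃ k, Aw k) x y) :
    patchLevel pw Aw x ≤ patchLevel pw Aw y := by
  match x, y, h with
  | .inl τ, .inr π, h =>
    obtain ⟨k, hk⟩ := Set.mem_iUnion.1 h
    rw [patchLevel_inl_eq_coe_iff.2 (hsol.mem_of_mem hk).1,
      hsol.patchLevel_inr_eq_coe_iff.2 ⟨τ, hk⟩]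
  | .inr π, .inl τ, h =>
    obtain ⟨S, hS, -⟩ := h.1
    obtain ⟨l, hl⟩ := pw.coverT τ (hsupp τ S hS).1
    rw [patchLevel_inl_eq_coe_iff.2 hl]
    dsimp only [patchLevel]
    split_ifs with hπ
    · obtain ⟨τ', hk⟩ := hπ.choose_spec
      exact WithBot.coe_le_coe.2 (hsol.le_of_mem_of_edgeOf hk hl h.1)
    · exact bot_le

theorem solStep_of_patchLevel_eq (hsol : IsPatchworkSolution pw Aw) {x y : T ⊕ P}
    (h : solStep w (⋃ k, Aw k) x y) (hx : patchLevel pw Aw x = k)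
    (hy : patchLevel pw Aw y = k) :
    solStep (clipW (pw.pPairs k) (pw.pTriples k) w) (Aw k) x y := by
  match x, y, h with
  | .inl τ, .inr π, h =>
    obtain ⟨l, hl⟩ := Set.mem_iUnion.1 h
    have hτ := patchLevel_inl_eq_coe_iff.1 hx
    exact Patchwork.eq_of_mem_pTriples (hsol.mem_of_mem hl).1 hτ ▸ hl
  | .inr π, .inl τ, ⟨hedge, hnot⟩ =>
    obtain ⟨τ', hk⟩ := hsol.patchLevel_inr_eq_coe_iff.1 hx
    exact ⟨(pw.isPatch k).edgeOf_clipW (patchLevel_inl_eq_coe_iff.1 hy)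
      (hsol.mem_of_mem hk).2.1 hedge, fun h => hnot (Set.mem_iUnion.2 ⟨k, h⟩)⟩

theorem exists_patchLevel_eq_of_cycle (hsol : IsPatchworkSolution pw Aw) {x : T ⊕ P}
    (h : Relation.TransGen (solStep w (⋃ k, Aw k)) x x) : ∃ k : I, patchLevel pw Aw x = k := by
  match x with
  | .inl τ =>
    obtain ⟨y, hxy, -⟩ := Relation.TransGen.head'_iff.1 h
    match y, hxy with
    | .inl _, hxy => exact hxy.elim
    | .inr _, hxy =>
      obtain ⟨k, hk⟩ := Set.mem_iUnion.1 hxy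
      exact ⟨k, patchLevel_inl_eq_coe_iff.2 (hsol.mem_of_mem hk).1⟩
  | .inr π =>
    obtain ⟨y, -, hyx⟩ := Relation.TransGen.tail'_iff.1 h
    match y, hyx with
    | .inr _, hyx => exact hyx.elim
    | .inl τ, hyx =>
      obtain ⟨k, hk⟩ := Set.mem_iUnion.1 hyx
      exact ⟨k, hsol.patchLevel_inr_eq_coe_iff.2 ⟨τ, hk⟩⟩

theorem not_transGen_solStep_iUnion
    (hsupp : ∀ (τ : T) (S : Finset P), w τ S ≠ 0 → τ ∈ triples ∧ ∀ π ∈ S, π ∈ pairs)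
    (hsol : IsPatchworkSolution pw Aw) (x : T ⊕ P) :
    ¬ Relation.TransGen (solStep w (⋃ k, Aw k)) x x := by
  intro h
  obtain ⟨k, hk⟩ := hsol.exists_patchLevel_eq_of_cycle h
  have hfiber := h.fiber_of_monotone (hsol.patchLevel_le_of_solStep hsupp) le_rfl
  refine (hsol.1 k).s3 x (Relation.TransGen.mono (fun a b ⟨hab, ha, hb⟩ => ?_) x x hfiber)
  exact hsol.solStep_of_patchLevel_eq hab (ha.trans hk) (hb.trans hk)

theorem isSolution_iUnion
    (hsupp : ∀ (τ : T) (S : Finset P), w τ S ≠ 0 → τ ∈ triples ∧ ∀ π ∈ S, π ∈ pairs)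
    (hsol : IsPatchworkSolution pw Aw) : IsSolution triples w (⋃ k, Aw k) where
  mem_edge τ π h := by
    obtain ⟨k, hk⟩ := Set.mem_iUnion.1 h
    exact (hsol.mem_of_mem hk).2.2
  s1 τ hτ := by
    obtain ⟨k, hk⟩ := pw.coverT τ hτ
    obtain ⟨π, hπ, huniq⟩ := (hsol.1 k).s1 τ hk
    refine ⟨π, Set.mem_iUnion.2 ⟨k, hπ⟩, fun π' h => ?_⟩
    obtain ⟨l, hl⟩ := Set.mem_iUnion.1 h
    exact huniq π' (Patchwork.eq_of_mem_pTriples (hsol.mem_of_mem hl).1 hk ▸ hl)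
  s1' τ π h := by
    obtain ⟨k, hk⟩ := Set.mem_iUnion.1 h
    obtain ⟨hτ, hπ, -⟩ := hsol.mem_of_mem hk
    exact (pw.isPatch k).simplyLinked_of_clipW hτ hπ ((hsol.1 k).s1' τ π hk)
  s2 π τ₁ h₁ τ₂ h₂ := by
    obtain ⟨k, hk⟩ := Set.mem_iUnion.1 h₁
    obtain ⟨l, hl⟩ := Set.mem_iUnion.1 h₂
    exact (hsol.1 k).s2 π hk (hsol.eq_of_mem_of_mem hk hl ▸ hl)
  s3 := hsol.not_transGen_solStep_iUnion hsupp

end IsPatchworkSolution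

end Patchworks

/-- Proposition 2.24.  Let `Ξ` be a system (a bipartite graph with
pair and triple vertices, links and nonzero complex weights).  If `Ξ` admits a patchwork
solution, then `Ξ` is solvable. -/
theorem patchwork_solution_implies_solvable
    {P T I : Type} [PartialOrder I]
    (pairs : Set P) (triples : Set T) (w : T → Finset P → ℂ)
    (hsupp : ∀ (τ : T) (S : Finset P), w τ S ≠ 0 → τ ∈ triples ∧ ∀ π ∈ S, π ∈ pairs)
    (pw : Patchwork pairs triples w I) (Aw : I → Set (T × P))
    (hsol : IsPatchworkSolution pw Aw) :
    Solvable triples w :=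
  ⟨⋃ k, Aw k, hsol.isSolution_iUnion hsupp⟩

end LW
end
end

section
/- Let Σ̄ = Σ̄(M,B) be the reduced Schubert system of a complex representation M of a quiver Q with ordered basis B. If a patch Ξ of Σ̄ is an extremal path, then Ξ admits an extremal solution. -/
/-!
Common framework for formalizing "Quiver Grassmannians of type D̃_n, Part 1"
(Lorscheid–Weist).

A quiver is given by finite vertex and arrow types with source and target maps.
A complex representation `M` of a quiver together with a chosen ordered basis `B`
is encoded by the data of the basis: a finite linearly ordered type `B`, a map
`F : B → Q.V` recording over which vertex each basis vector lies, and the matrix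
coefficients `μ v i j` of the structure maps, i.e. `M_v(i) = ∑ j, μ v i j • j`.
-/

open scoped Classical

noncomputable section

namespace LW

variable {Q : QuiverData}

/-! Orienting every edge `τ_e — π_{e+1}` of a path `π₀ — τ₀ — π₁ — ⋯ — τ_{n-1} — π_n` away
from its triple gives each triple one outgoing edge and each pair at most one incoming edge,
and every oriented step raises the position along the path (`π_k ↦ 2k`, `τ_e ↦ 2e + 1`),
so there are no oriented cycles. -/

theorem not_transGen_self_of_rel_lt {α β : Type*} [Preorder β] {r : α → α → Prop}
    (f : α → β) (hf : ∀ a b, r a b → f a < f b) (x : α) : ¬ Relation.TransGen r x x :=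
  fun hx => lt_irrefl (f x) <| by
    simpa only [Relation.transGen_eq_self] using Relation.TransGen.lift f hf x x hx

section PathOrientation

variable {P T : Type} {n : ℕ} (τs : Fin n → T) (πs : Fin (n + 1) → P)

def pathOrientation : Set (T × P) := Set.range fun e => (τs e, πs e.succ)

def pathPosition : T ⊕ P → ℕ :=
  Sum.elim (Function.extend τs (fun e => 2 * (e : ℕ) + 1) 0)
    (Function.extend πs (fun k => 2 * (k : ℕ)) 0)

variable {τs πs}

theorem pathOrientation_existsUnique (hτ : Function.Injective τs) (e : Fin n) :
    ∃! π, (τs e, π) ∈ pathOrientation τs πs :=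
  ⟨πs e.succ, ⟨e, rfl⟩, fun _ ⟨e', he'⟩ => by
    obtain ⟨hττ, rfl⟩ := Prod.mk.inj he'
    rw [hτ hττ]⟩

theorem pathOrientation_subsingleton (hπ : Function.Injective πs) (π : P) :
    {τ | (τ, π) ∈ pathOrientation τs πs}.Subsingleton := by
  rintro _ ⟨e₁, he₁⟩ _ ⟨e₂, he₂⟩
  obtain ⟨rfl, hπ₁⟩ := Prod.mk.inj he₁
  obtain ⟨rfl, hπ₂⟩ := Prod.mk.inj he₂
  rw [Fin.succ_injective _ (hπ (hπ₁.trans hπ₂.symm))]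

theorem pathOrientation_acyclic {w : T → Finset P → ℂ} (hτ : Function.Injective τs)
    (hπ : Function.Injective πs)
    (honly : ∀ τ π, edgeOf w τ π → ∃ e : Fin n, τ = τs e ∧ (π = πs e.castSucc ∨ π = πs e.succ))
    (x : T ⊕ P) : ¬ Relation.TransGen (solStep w (pathOrientation τs πs)) x x := by
  have hposτ (e : Fin n) : pathPosition τs πs (Sum.inl (τs e)) = 2 * e + 1 :=
    hτ.extend_apply (fun e => 2 * (e : ℕ) + 1) 0 e
  have hposπ (k : Fin (n + 1)) : pathPosition τs πs (Sum.inr (πs k)) = 2 * k :=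
    hπ.extend_apply (fun k => 2 * (k : ℕ)) 0 k
  refine not_transGen_self_of_rel_lt (pathPosition τs πs) ?_ x
  rintro (τ | π) (τ' | π') hstep
  · exact hstep.elim
  · obtain ⟨e, he⟩ := hstep
    obtain ⟨rfl, rfl⟩ := Prod.mk.inj he
    rw [hposτ, hposπ, Fin.val_succ]
    omega
  · obtain ⟨hedge, hnot⟩ := hstep
    obtain ⟨e, rfl, rfl | rfl⟩ := honly _ _ hedge
    · rw [hposπ, hposτ, Fin.val_castSucc]
      omega
    · exact (hnot ⟨e, rfl⟩).elim
  · exact hstep.elim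

end PathOrientation

theorem extremal_path_has_extremal_solution_general
    (Q : QuiverData) (R : BasedRep Q)
    (P' : Set (R.B × R.B)) (T' : Set (Q.A × R.B × R.B))
    (n : ℕ) (πs : Fin (n + 1) → R.B × R.B) (τs : Fin n → Q.A × R.B × R.B)
    (hπ : Function.Injective πs) (hτ : Function.Injective τs)
    (hTeq : T' = Set.range τs)
    (hedge2 : ∀ e : Fin n, edgeOf (clipW P' T' R.redWeight) (τs e) (πs e.succ))
    (honly : ∀ τ π, edgeOf (clipW P' T' R.redWeight) τ π →
      ∃ e : Fin n, τ = τs e ∧ (π = πs e.castSucc ∨ π = πs e.succ))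
    (hext : ∀ τ π, edgeOf (clipW P' T' R.redWeight) τ π → R.ExtremalEdge τ π) :
    ∃ Aw, R.IsExtremalSolution T' (clipW P' T' R.redWeight) Aw := by
  subst hTeq
  refine ⟨pathOrientation τs πs, ?_, ?_, pathOrientation_subsingleton hπ,
    pathOrientation_acyclic hτ hπ honly⟩
  · rintro τ π ⟨e, he⟩
    obtain ⟨rfl, rfl⟩ := Prod.mk.inj he
    exact ⟨hedge2 e, hext _ _ (hedge2 e)⟩
  · rintro _ ⟨e, rfl⟩
    exact pathOrientation_existsUnique hτ e

/-- Corollary 2.29.  If a patch `Ξ` of the reduced Schubert system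
`Σ̄ = Σ̄(M,B)` is an extremal path `π₀ — τ₁ — π₁ — ⋯ — τ_n — π_n` (all of whose edges
are extremal), then `Ξ` admits an extremal solution. -/
theorem extremal_path_has_extremal_solution
    (Q : QuiverData) (R : BasedRep Q)
    (P' : Set (R.B × R.B)) (T' : Set (Q.A × R.B × R.B))
    (hpatch : IsPatchOf R.Rel2lt R.Rel3red R.redWeight P' T')
    (n : ℕ) (πs : Fin (n + 1) → R.B × R.B) (τs : Fin n → Q.A × R.B × R.B)
    (hπ : Function.Injective πs) (hτ : Function.Injective τs)
    (hPeq : P' = Set.range πs) (hTeq : T' = Set.range τs)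
    (hedge1 : ∀ e : Fin n, edgeOf (clipW P' T' R.redWeight) (τs e) (πs e.castSucc))
    (hedge2 : ∀ e : Fin n, edgeOf (clipW P' T' R.redWeight) (τs e) (πs e.succ))
    (honly : ∀ τ π, edgeOf (clipW P' T' R.redWeight) τ π →
      ∃ e : Fin n, τ = τs e ∧ (π = πs e.castSucc ∨ π = πs e.succ))
    (hext : ∀ τ π, edgeOf (clipW P' T' R.redWeight) τ π → R.ExtremalEdge τ π) :
    ∃ Aw, R.IsExtremalSolution T' (clipW P' T' R.redWeight) Aw :=
  extremal_path_has_extremal_solution_general Q R P' T' n πs τs hπ hτ hTeq hedge2 honly hext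

end LW
end
end
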